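/- For even n and a divisor k of n, set Ψ_h(m) = M(n−2m)·n!·m!·2^m·C(n−kh−m−1, m−1)·C(n/k, h)²·(2k)^h·h! (so Ψ₀(m) = M(n−2m)·n!·m!·2^m·C(n−m−1, m−1)), where M(j) = (j−1)!! is the number of perfect matchings of j labelled points, and let J_n = {m ∈ ℤ : ⌈(1/3 − δ_n)n⌉ ≤ m ≤ ⌊(1/3 + δ_n)n⌋} with δ_n = (1/2)·(log n)^{−1/3}. Let n → ∞ through even integers and let k = k(n) be a divisor of n with k ≥ K₀(n), and set h* = ⌈n/(k·√(log k))⌉. Then Σ_{h=1}^{h*} Σ_{m ∈ J_n} Ψ_h(m) / Σ_{m ∈ J_n} Ψ₀(m) → 0. -/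

import Mathlib

/-- `K₀(n) = log₂(2n/e) / (1 − (1/2)·log₂ 3)`. -/
noncomputable def K0 (n : ℕ) : ℝ :=
  Real.logb 2 (2 * n / Real.exp 1) / (1 - Real.logb 2 3 / 2)

/-- `M(j) = (j−1)!!`, the number of perfect matchings of `j` labelled points
(with `M(0) = 1`). -/
def numMatchings (j : ℕ) : ℕ := Nat.doubleFactorial (j - 1)

/-- `Ψ_h(m) = M(n−2m)·n!·m!·2^m·C(n−kh−m−1, m−1)·C(n/k, h)²·(2k)^h·h!`
(so `Ψ₀(m) = M(n−2m)·n!·m!·2^m·C(n−m−1, m−1)`). -/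
noncomputable def PsiH (n k h m : ℕ) : ℝ :=
  (numMatchings (n - 2 * m) : ℝ) * (n.factorial : ℝ) * (m.factorial : ℝ) * 2 ^ m *
    ((n - k * h - m - 1).choose (m - 1) : ℝ) * ((n / k).choose h : ℝ) ^ 2 *
    (2 * (k : ℝ)) ^ h * (h.factorial : ℝ)

/-- `J_n = {m : ⌈(1/3 − δ_n)n⌉ ≤ m ≤ ⌊(1/3 + δ_n)n⌋}` with `δ_n = (1/2)(log n)^{−1/3}`. -/
noncomputable def Jn (n : ℕ) : Finset ℕ :=
  Finset.Icc ⌈((1 : ℝ) / 3 - (Real.log n) ^ (-(1 : ℝ) / 3) / 2) * n⌉₊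
             ⌊((1 : ℝ) / 3 + (Real.log n) ^ (-(1 : ℝ) / 3) / 2) * n⌋₊

/-- `h* = ⌈n/(k·√(log k))⌉`. -/
noncomputable def hstar (n k : ℕ) : ℕ :=
  ⌈(n : ℝ) / ((k : ℝ) * Real.sqrt (Real.log k))⌉₊

/-!
For `m ∈ J_n` we have `m ≈ n/3`, so `C(A − t, m − 1) ≤ (2/3)^t · C(A, m − 1)` for `A = n − m − 1`
(each removed point costs the factor `(A − m + 1)/A ≤ 2/3`), while the remaining `h`-dependent
factors of `Ψ_h(m)` are at most `(2n²)^h`. Hence `Ψ_h(m) ≤ X^h · Ψ₀(m)` with `X = 2n²·(2/3)^k`, and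
the ratio is at most `X/(1 − X)` whatever the range of `h`. Finally `k ≥ K₀(n)` gives
`(2/3)^k ≤ (2n/e)^(−α)` with `α = 2 log(3/2)/log(4/3) > 2`, so `X → 0`.
-/

open Filter Real Finset Topology

lemma choose_pred_mul_le_choose_mul {A B r : ℕ} (hBA : B ≤ A) :
    (B - 1).choose r * A ≤ B.choose r * (A - r) := by
  obtain _ | B := B
  · rcases r with _ | r <;> simp
  have hratio : (B + 1 - r) * A ≤ (A - r) * (B + 1) := by
    rcases le_total r (B + 1) with hr | hr
    · zify [hr, hr.trans hBA]
      nlinarith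
    · simp [Nat.sub_eq_zero_of_le hr]
  refine Nat.le_of_mul_le_mul_right ?_ B.succ_pos
  calc B.choose r * A * (B + 1) = (B + 1).choose r * ((B + 1 - r) * A) := by
        rw [mul_right_comm, Nat.choose_mul_succ_eq, mul_assoc]
    _ ≤ (B + 1).choose r * ((A - r) * (B + 1)) := Nat.mul_le_mul_left _ hratio
    _ = (B + 1).choose r * (A - r) * (B + 1) := by ring

lemma choose_sub_mul_pow_le {A r : ℕ} (t : ℕ) :
    (A - t).choose r * A ^ t ≤ A.choose r * (A - r) ^ t := by
  induction t with
  | zero => simp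
  | succ t ih =>
    calc (A - (t + 1)).choose r * A ^ (t + 1)
        = (A - t - 1).choose r * A * A ^ t := by rw [Nat.sub_succ', pow_succ]; ring
      _ ≤ (A - t).choose r * (A - r) * A ^ t :=
          Nat.mul_le_mul_right _ (choose_pred_mul_le_choose_mul (Nat.sub_le _ _))
      _ = (A - t).choose r * A ^ t * (A - r) := by ring
      _ ≤ A.choose r * (A - r) ^ t * (A - r) := Nat.mul_le_mul_right _ ih
      _ = A.choose r * (A - r) ^ (t + 1) := by rw [pow_succ, mul_assoc]

lemma choose_sub_le_pow_mul_choose {A r : ℕ} (t : ℕ) (hA : 0 < A) {q : ℝ}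
    (hq : ((A - r : ℕ) : ℝ) ≤ q * A) :
    ((A - t).choose r : ℝ) ≤ q ^ t * A.choose r := by
  have hApow : (0 : ℝ) < (A : ℝ) ^ t := by positivity
  have hmul : ((A - t).choose r : ℝ) * (A : ℝ) ^ t ≤ A.choose r * ((A - r : ℕ) : ℝ) ^ t := by
    exact_mod_cast choose_sub_mul_pow_le t
  rw [← mul_le_mul_iff_left₀ hApow]
  calc ((A - t).choose r : ℝ) * (A : ℝ) ^ t ≤ A.choose r * ((A - r : ℕ) : ℝ) ^ t := hmul
    _ ≤ A.choose r * (q * A) ^ t := by gcongr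
    _ = q ^ t * A.choose r * (A : ℝ) ^ t := by ring

lemma choose_sq_mul_factorial_le_pow (a h : ℕ) : a.choose h ^ 2 * h.factorial ≤ a ^ (2 * h) :=
  calc a.choose h ^ 2 * h.factorial = a.choose h * (h.factorial * a.choose h) := by ring
    _ = a.choose h * a.descFactorial h := by rw [Nat.descFactorial_eq_factorial_mul_choose]
    _ ≤ a ^ h * a ^ h := Nat.mul_le_mul (Nat.choose_le_pow _ _) (Nat.descFactorial_le_pow _ _)
    _ = a ^ (2 * h) := by ring

lemma choose_div_sq_mul_pow_mul_factorial_le (n k h : ℕ) :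
    (n / k).choose h ^ 2 * (2 * k) ^ h * h.factorial ≤ (2 * n ^ 2) ^ h :=
  calc (n / k).choose h ^ 2 * (2 * k) ^ h * h.factorial
      = (n / k).choose h ^ 2 * h.factorial * (2 * k) ^ h := by ring
    _ ≤ (n / k) ^ (2 * h) * (2 * k) ^ h := by gcongr; exact choose_sq_mul_factorial_le_pow _ _
    _ = (2 * (n / k) * (n / k * k)) ^ h := by ring
    _ ≤ (2 * n * n) ^ h := by gcongr; exacts [Nat.div_le_self n k, Nat.div_mul_le_self n k]
    _ = (2 * n ^ 2) ^ h := by ring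

lemma PsiH_nonneg (n k h m : ℕ) : 0 ≤ PsiH n k h m := by
  unfold PsiH; positivity

lemma PsiH_le_pow_mul_PsiH_zero {n k m : ℕ} (h : ℕ) (hm : n + 2 ≤ 4 * m) (hmn : m + 2 ≤ n) :
    PsiH n k h m ≤ (2 * (n : ℝ) ^ 2 * (2 / 3) ^ k) ^ h * PsiH n k 0 m := by
  have hchoose : ((n - k * h - m - 1).choose (m - 1) : ℝ)
      ≤ (2 / 3) ^ (k * h) * (n - m - 1).choose (m - 1) := by
    rw [show n - k * h - m - 1 = n - m - 1 - k * h by omega]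
    refine choose_sub_le_pow_mul_choose _ (by omega) ?_
    have hratio : 3 * (n - m - 1 - (m - 1)) ≤ 2 * (n - m - 1) := by omega
    have hratio' : (3 : ℝ) * (n - m - 1 - (m - 1) : ℕ) ≤ 2 * (n - m - 1 : ℕ) := by
      exact_mod_cast hratio
    linarith
  have hweight : ((n / k).choose h : ℝ) ^ 2 * (2 * (k : ℝ)) ^ h * h.factorial
      ≤ (2 * (n : ℝ) ^ 2) ^ h := by
    exact_mod_cast choose_div_sq_mul_pow_mul_factorial_le n k h
  unfold PsiH
  calc _ = (numMatchings (n - 2 * m) : ℝ) * n.factorial * m.factorial * 2 ^ m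
          * (n - k * h - m - 1).choose (m - 1)
          * (((n / k).choose h : ℝ) ^ 2 * (2 * (k : ℝ)) ^ h * h.factorial) := by ring
    _ ≤ (numMatchings (n - 2 * m) : ℝ) * n.factorial * m.factorial * 2 ^ m
          * ((2 / 3) ^ (k * h) * (n - m - 1).choose (m - 1)) * (2 * (n : ℝ) ^ 2) ^ h := by
        gcongr
    _ = _ := by simp only [mul_zero, Nat.sub_zero, Nat.choose_zero_right]; ring

lemma sum_Icc_sum_div_le_of_le_pow_mul {ι : Type*} (s : Finset ι) (f : ℕ → ι → ℝ) {X : ℝ}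
    (hX0 : 0 ≤ X) (hX1 : X < 1) (hf0 : ∀ m ∈ s, 0 ≤ f 0 m)
    (hf : ∀ h, ∀ m ∈ s, f h m ≤ X ^ h * f 0 m) (H : ℕ) :
    (∑ h ∈ Icc 1 H, ∑ m ∈ s, f h m) / ∑ m ∈ s, f 0 m ≤ X / (1 - X) := by
  have hD : 0 ≤ ∑ m ∈ s, f 0 m := sum_nonneg hf0
  refine div_le_of_le_mul₀ hD (div_nonneg hX0 (by linarith)) ?_
  calc ∑ h ∈ Icc 1 H, ∑ m ∈ s, f h m ≤ ∑ h ∈ Icc 1 H, X ^ h * ∑ m ∈ s, f 0 m := by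
        gcongr with h
        rw [mul_sum]
        exact sum_le_sum (hf h)
    _ = (∑ h ∈ Ico 1 (H + 1), X ^ h) * ∑ m ∈ s, f 0 m := by
        rw [← sum_mul, Ico_add_one_right_eq_Icc]
    _ ≤ X / (1 - X) * ∑ m ∈ s, f 0 m := by
        gcongr
        simpa using geom_sum_Ico_le_of_lt_one (m := 1) (n := H + 1) hX0 hX1

lemma eventually_mem_Jn_bounds :
    ∀ᶠ n in atTop, ∀ m ∈ Jn n, n + 2 ≤ 4 * m ∧ m + 2 ≤ n := by
  have hδ : Tendsto (fun n : ℕ => log n ^ (-(1 : ℝ) / 3)) atTop (𝓝 0) := by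
    have := (tendsto_rpow_neg_atTop (by norm_num : (0 : ℝ) < 1 / 3)).comp
      (tendsto_log_atTop.comp tendsto_natCast_atTop_atTop)
    simpa [neg_div, Function.comp_def] using this
  filter_upwards [eventually_ge_atTop 15, hδ.eventually_le_const (by norm_num : (0 : ℝ) < 1 / 10)]
    with n hn hδn m hm
  have hn' : (15 : ℝ) ≤ n := by exact_mod_cast hn
  have hδ0 : 0 ≤ log n ^ (-(1 : ℝ) / 3) := rpow_nonneg (log_natCast_nonneg n) _
  rw [Jn, Finset.mem_Icc, Nat.ceil_le, Nat.le_floor_iff (by positivity)] at hm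
  have hlow : (n : ℝ) + 2 ≤ 4 * m := by nlinarith
  have hup : (m : ℝ) + 2 ≤ n := by nlinarith
  exact ⟨by exact_mod_cast hlow, by exact_mod_cast hup⟩

lemma K0_eq (n : ℕ) : K0 n = 2 * log (2 * n / exp 1) / log (4 / 3) := by
  have h43 : log (4 / 3) = 2 * log 2 - log 3 := by
    rw [log_div (by norm_num) (by norm_num), show (4 : ℝ) = 2 ^ 2 by norm_num, log_pow]
    push_cast; ring
  have hlog2 : log 2 ≠ 0 := (log_pos (by norm_num)).ne'
  have hlog43 : log (4 / 3) ≠ 0 := (log_pos (by norm_num)).ne'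
  rw [h43] at hlog43 ⊢
  unfold K0 logb
  field_simp

lemma two_thirds_rpow_K0 {n : ℕ} (hn : 0 < n) :
    (2 / 3 : ℝ) ^ K0 n = (2 * n / exp 1) ^ (-(2 * log (3 / 2) / log (4 / 3))) := by
  rw [rpow_def_of_pos (by norm_num), rpow_def_of_pos (by positivity), K0_eq,
    show (2 / 3 : ℝ) = (3 / 2)⁻¹ by norm_num, log_inv]
  ring_nf

lemma two_lt_two_mul_log_div_log : 2 < 2 * log (3 / 2) / log (4 / 3) := by
  rw [lt_div_iff₀ (log_pos (by norm_num))]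
  linarith [log_lt_log (by norm_num : (0 : ℝ) < 4 / 3) (by norm_num : (4 / 3 : ℝ) < 3 / 2)]

lemma tendsto_sq_mul_rpow_neg_atTop {α : ℝ} (hα : 2 < α) {c : ℝ} (hc : 0 < c) :
    Tendsto (fun x : ℝ => x ^ 2 * (c * x) ^ (-α)) atTop (𝓝 0) := by
  have h := (tendsto_rpow_neg_atTop (by linarith : 0 < α - 2)).const_mul (c ^ (-α))
  rw [mul_zero] at h
  refine h.congr' ?_
  filter_upwards [eventually_gt_atTop 0] with x hx
  rw [mul_rpow hc.le hx.le, ← rpow_natCast, neg_sub, sub_eq_add_neg, rpow_add hx]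
  push_cast
  ring

lemma tendsto_sq_mul_two_thirds_pow_of_K0_le {N k : ℕ → ℕ} (hN : Tendsto N atTop atTop)
    (hK : ∀ i, K0 (N i) ≤ k i) :
    Tendsto (fun i => 2 * (N i : ℝ) ^ 2 * (2 / 3) ^ k i) atTop (𝓝 0) := by
  have hg := ((tendsto_sq_mul_rpow_neg_atTop two_lt_two_mul_log_div_log
    (by positivity : (0 : ℝ) < 2 / exp 1)).const_mul 2).comp
    (tendsto_natCast_atTop_atTop.comp hN)
  rw [mul_zero] at hg
  refine squeeze_zero' (.of_forall fun i => by positivity) ?_ hg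
  filter_upwards [hN.eventually_gt_atTop 0] with i hi
  calc 2 * (N i : ℝ) ^ 2 * (2 / 3) ^ k i = 2 * (N i : ℝ) ^ 2 * (2 / 3) ^ (k i : ℝ) := by
        rw [rpow_natCast]
    _ ≤ 2 * (N i : ℝ) ^ 2 * (2 / 3) ^ K0 (N i) := by
        gcongr 2 * _ * ?_
        exact rpow_le_rpow_of_exponent_ge (by norm_num) (by norm_num) (hK i)
    _ = 2 * ((N i : ℝ) ^ 2 * (2 / exp 1 * N i) ^ (-(2 * log (3 / 2) / log (4 / 3)))) := by
        rw [two_thirds_rpow_K0 hi, mul_div_right_comm]; ring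

theorem stmt16_general (N k : ℕ → ℕ)
    (hN : Filter.Tendsto N Filter.atTop Filter.atTop)
    (hK : ∀ i, K0 (N i) ≤ (k i : ℝ)) :
    Filter.Tendsto
      (fun i =>
        (∑ h ∈ Finset.Icc 1 (hstar (N i) (k i)), ∑ m ∈ Jn (N i), PsiH (N i) (k i) h m) /
          ∑ m ∈ Jn (N i), PsiH (N i) (k i) 0 m)
      Filter.atTop (nhds 0) := by
  set X : ℕ → ℝ := fun i => 2 * (N i : ℝ) ^ 2 * (2 / 3) ^ k i
  have hX : Tendsto X atTop (𝓝 0) := tendsto_sq_mul_two_thirds_pow_of_K0_le hN hK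
  have hbound : Tendsto (fun i => X i / (1 - X i)) atTop (𝓝 0) := by
    have h := hX.div (tendsto_const_nhds.sub hX) (by norm_num : (1 : ℝ) - 0 ≠ 0)
    rwa [zero_div] at h
  refine squeeze_zero' (.of_forall fun i => div_nonneg
    (sum_nonneg fun h _ => sum_nonneg fun m _ => PsiH_nonneg _ _ _ _)
    (sum_nonneg fun m _ => PsiH_nonneg _ _ _ _)) ?_ hbound
  filter_upwards [hN.eventually eventually_mem_Jn_bounds, hX.eventually_lt_const one_pos]
    with i hJ hX1
  exact sum_Icc_sum_div_le_of_le_pow_mul _ _ (by positivity) hX1 (fun m _ => PsiH_nonneg _ _ _ _)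
    (fun h m hm => PsiH_le_pow_mul_PsiH_zero h (hJ m hm).1 (hJ m hm).2) _

/-- As `n → ∞` through even integers, with `k = k(n)` a divisor of `n` satisfying
`k ≥ K₀(n)`: `Σ_{h=1}^{h*} Σ_{m ∈ J_n} Ψ_h(m) / Σ_{m ∈ J_n} Ψ₀(m) → 0`. -/
theorem stmt16 (N k : ℕ → ℕ) (hNeven : ∀ i, Even (N i)) (hNpos : ∀ i, 0 < N i)
    (hN : Filter.Tendsto N Filter.atTop Filter.atTop)
    (hdvd : ∀ i, k i ∣ N i) (hK : ∀ i, K0 (N i) ≤ (k i : ℝ)) :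
    Filter.Tendsto
      (fun i =>
        (∑ h ∈ Finset.Icc 1 (hstar (N i) (k i)), ∑ m ∈ Jn (N i), PsiH (N i) (k i) h m) /
          ∑ m ∈ Jn (N i), PsiH (N i) (k i) 0 m)
      Filter.atTop (nhds 0) :=
  stmt16_general N k hN hK
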